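/- (McDiarmid / bounded differences, the concentration step behind Rademacher bounds) Let f : Z^n → ℝ satisfy the bounded differences property with constants c_1,...,c_n: changing the i-th coordinate changes f by at most c_i. If Z_1,...,Z_n are independent Z-valued random variables, then for every t > 0, P( f(Z_1,...,Z_n) − E[f(Z_1,...,Z_n)] ≥ t ) ≤ exp( −2t² / ∑_{i=1}^n c_i² ). -/

import Mathlib

/-!
Doob-martingale argument, one coordinate at a time. Averaging out the first coordinate,
`g y = ∫ f (x, y) dμ₀(x)`, splits `f (x, y) - E f = (g y - E g) + (f (x, y) - g y)`.
For fixed `y` the second summand is centred and ranges over an interval of length `c₀`, so by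
Hoeffding's lemma it is sub-Gaussian with parameter `c₀² / 4`; `g` again has bounded differences,
so by induction the first summand is sub-Gaussian with parameter `∑_{i ≥ 1} cᵢ² / 4`. By Fubini
the parameters add, and the Chernoff bound for parameter `∑ cᵢ² / 4` is `exp (-2 t² / ∑ cᵢ²)`.
Independence identifies the law of `(Z₁, …, Zₙ)` with the product of the marginals.
-/

open MeasureTheory Real ProbabilityTheory
open scoped NNReal

def HasBoundedDifferences {ι : Type*} {α : ι → Type*} (f : ((i : ι) → α i) → ℝ) (c : ι → ℝ) :
    Prop :=
  ∀ i (z z' : (i : ι) → α i), (∀ j, j ≠ i → z j = z' j) → |f z - f z'| ≤ c i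

namespace HasBoundedDifferences

section Finite

variable {ι : Type*} [Fintype ι] {α : ι → Type*} {f : ((i : ι) → α i) → ℝ} {c : ι → ℝ}

theorem abs_sub_le_sum (hf : HasBoundedDifferences f c) (z z' : (i : ι) → α i) :
    |f z - f z'| ≤ ∑ i, c i := by
  classical
  suffices h : ∀ s : Finset ι, |f (s.piecewise z' z) - f z| ≤ ∑ i ∈ s, c i by
    simpa [abs_sub_comm] using h Finset.univ
  intro s
  induction s using Finset.induction_on with
  | empty => simp
  | @insert j s hj ih =>
    calc |f ((insert j s).piecewise z' z) - f z|
        ≤ |f ((insert j s).piecewise z' z) - f (s.piecewise z' z)|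
          + |f (s.piecewise z' z) - f z| := abs_sub_le _ _ _
      _ ≤ c j + ∑ i ∈ s, c i := by
        refine add_le_add (hf j _ _ fun k hk => ?_) ih
        rw [Finset.piecewise_insert, Function.update_of_ne hk]
      _ = ∑ i ∈ insert j s, c i := (Finset.sum_insert hj).symm

theorem mem_Icc (hf : HasBoundedDifferences f c) (z₀ z : (i : ι) → α i) :
    f z ∈ Set.Icc (f z₀ - ∑ i, c i) (f z₀ + ∑ i, c i) := by
  have := abs_sub_le_iff.1 (hf.abs_sub_le_sum z z₀)
  constructor <;> linarith [this.1, this.2]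

end Finite

section InsertNth

variable {n : ℕ} {α : Fin (n + 1) → Type*} {f : ((i : Fin (n + 1)) → α i) → ℝ}
  {c : Fin (n + 1) → ℝ}

theorem comp_insertNth (hf : HasBoundedDifferences f c) (i : Fin (n + 1)) (x : α i) :
    HasBoundedDifferences (fun y => f (i.insertNth x y)) (fun j => c (i.succAbove j)) := by
  intro j y y' hyy'
  refine hf _ _ _ fun k hk => ?_
  induction k using Fin.succAboveCases i with
  | x => simp
  | p k =>
    simp only [Fin.insertNth_apply_succAbove]
    exact hyy' k fun h => hk (h ▸ rfl)

theorem abs_sub_insertNth_le (hf : HasBoundedDifferences f c) (i : Fin (n + 1)) (x x' : α i)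
    (y : (j : Fin n) → α (i.succAbove j)) :
    |f (i.insertNth x y) - f (i.insertNth x' y)| ≤ c i := by
  refine hf _ _ _ fun k hk => ?_
  induction k using Fin.succAboveCases i with
  | x => exact absurd rfl hk
  | p k => simp

end InsertNth

theorem integral {ι : Type*} {α : ι → Type*} {β : Type*} [MeasurableSpace β] {μ : Measure β}
    [IsProbabilityMeasure μ] {F : β → ((i : ι) → α i) → ℝ} {c : ι → ℝ}
    (hF : ∀ x, HasBoundedDifferences (F x) c) (hint : ∀ z, Integrable (fun x => F x z) μ) :
    HasBoundedDifferences (fun z => ∫ x, F x z ∂μ) c := by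
  intro i z z' hzz'
  rw [← integral_sub (hint z) (hint z')]
  simpa using norm_integral_le_of_norm_le_const (μ := μ) (C := c i)
    (f := fun x => F x z - F x z') (Filter.Eventually.of_forall fun x => hF x i z z' hzz')

end HasBoundedDifferences

theorem exists_forall_mem_Icc_of_abs_sub_le {β : Type*} [Nonempty β] {h : β → ℝ} {c : ℝ}
    (hh : ∀ x x', |h x - h x'| ≤ c) : ∃ a, ∀ x, h x ∈ Set.Icc a (a + c) := by
  obtain ⟨x₀⟩ := ‹Nonempty β›
  have hbdd : BddBelow (Set.range h) :=
    ⟨h x₀ - c, by rintro _ ⟨x, rfl⟩; linarith [(abs_sub_le_iff.1 (hh x₀ x)).1]⟩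
  refine ⟨⨅ x, h x, fun x => ⟨ciInf_le hbdd x, ?_⟩⟩
  have : h x - c ≤ ⨅ x, h x := le_ciInf fun x' => by linarith [(abs_sub_le_iff.1 (hh x x')).1]
  linarith

theorem ProbabilityTheory.HasSubgaussianMGF.add_prod {X Y : Type*} [MeasurableSpace X]
    [MeasurableSpace Y] {μ : Measure X} {ν : Measure Y} [SFinite μ] [SFinite ν]
    {G : Y → ℝ} {H : X × Y → ℝ} {cG cH : ℝ≥0} (hG : HasSubgaussianMGF G cG ν)
    (hH : ∀ y, HasSubgaussianMGF (fun x => H (x, y)) cH μ)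
    (hint : ∀ t, Integrable (fun p => exp (t * (G p.2 + H p))) (μ.prod ν)) :
    HasSubgaussianMGF (fun p => G p.2 + H p) (cG + cH) (μ.prod ν) where
  integrable_exp_mul := hint
  mgf_le t := calc
    mgf (fun p => G p.2 + H p) (μ.prod ν) t
      = ∫ y, exp (t * G y) * mgf (fun x => H (x, y)) μ t ∂ν := by
        simp_rw [mgf, integral_prod_symm _ (hint t), mul_add, exp_add, ← integral_const_mul]
    _ ≤ ∫ y, exp (t * G y) * exp (cH * t ^ 2 / 2) ∂ν := by
        refine integral_mono_of_nonneg (ae_of_all _ fun y => ?_)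
          ((hG.integrable_exp_mul t).mul_const _) (ae_of_all _ fun y => ?_)
        · exact mul_nonneg (exp_pos _).le mgf_nonneg
        · exact mul_le_mul_of_nonneg_left ((hH y).mgf_le t) (exp_pos _).le
    _ ≤ exp ((cG + cH : ℝ≥0) * t ^ 2 / 2) := by
        rw [integral_mul_const, NNReal.coe_add, add_mul, add_div, exp_add]
        exact mul_le_mul_of_nonneg_right (hG.mgf_le t) (exp_pos _).le

section InsertNth

variable {n : ℕ} {α : Fin (n + 1) → Type*} [∀ i, MeasurableSpace (α i)]

theorem Fin.measurable_insertNth_uncurry (i : Fin (n + 1)) :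
    Measurable fun p : α i × ((j : Fin n) → α (i.succAbove j)) => i.insertNth p.1 p.2 :=
  (MeasurableEquiv.piFinSuccAbove α i).symm.measurable

theorem HasBoundedDifferences.hasSubgaussianMGF_sub_integral_insertNth
    {f : ((i : Fin (n + 1)) → α i) → ℝ} {c : Fin (n + 1) → ℝ} (hfm : Measurable f)
    (hf : HasBoundedDifferences f c) (i : Fin (n + 1)) (μ : Measure (α i))
    [IsProbabilityMeasure μ] (y : (j : Fin n) → α (i.succAbove j)) :
    HasSubgaussianMGF (fun x => f (i.insertNth x y) - ∫ x', f (i.insertNth x' y) ∂μ)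
      ((‖c i‖₊ / 2) ^ 2) μ := by
  have : Nonempty (α i) := nonempty_of_isProbabilityMeasure μ
  obtain ⟨a, ha⟩ := exists_forall_mem_Icc_of_abs_sub_le (hf.abs_sub_insertNth_le i · · y)
  have hm : Measurable fun x => f (i.insertNth x y) :=
    hfm.comp ((Fin.measurable_insertNth_uncurry i).comp measurable_prodMk_right)
  simpa using hasSubgaussianMGF_of_mem_Icc hm.aemeasurable (ae_of_all μ ha)

end InsertNth

theorem HasBoundedDifferences.hasSubgaussianMGF_sub_integral_pi {n : ℕ} {α : Fin n → Type*}
    [∀ i, MeasurableSpace (α i)] (μ : (i : Fin n) → Measure (α i))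
    [∀ i, IsProbabilityMeasure (μ i)] {f : ((i : Fin n) → α i) → ℝ} {c : Fin n → ℝ}
    (hfm : Measurable f) (hf : HasBoundedDifferences f c) :
    HasSubgaussianMGF (fun z => f z - ∫ z', f z' ∂Measure.pi μ) (∑ i, (‖c i‖₊ / 2) ^ 2)
      (Measure.pi μ) := by
  induction n with
  | zero =>
    have hf0 : ∀ z, f z - ∫ z', f z' ∂Measure.pi μ = 0 := fun z => by
      rw [integral_congr_ae (g := fun _ => f z)
        (ae_of_all _ fun z' => congrArg f (Subsingleton.elim z' z))]
      simp
    simp [hf0, HasSubgaussianMGF.fun_zero]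
  | succ n ih =>
    set e := MeasurableEquiv.piFinSuccAbove α 0
    set ν := Measure.pi fun j => μ (Fin.succAbove 0 j)
    have hmp : MeasurePreserving e (Measure.pi μ) ((μ 0).prod ν) :=
      measurePreserving_piFinSuccAbove μ 0
    have he : ∀ z, Fin.insertNth 0 (e z).1 (e z).2 = z := e.symm_apply_apply
    obtain ⟨z₀⟩ := nonempty_of_isProbabilityMeasure (Measure.pi μ)
    have hF : Measurable fun p : α 0 × _ => f (Fin.insertNth 0 p.1 p.2) :=
      hfm.comp (Fin.measurable_insertNth_uncurry 0)
    set g := fun y => ∫ x, f (Fin.insertNth 0 x y) ∂μ 0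
    have hgm : Measurable g := hF.stronglyMeasurable.integral_prod_left'.measurable
    have hg : HasBoundedDifferences g fun j => c (Fin.succAbove 0 j) :=
      HasBoundedDifferences.integral (fun x => hf.comp_insertNth 0 x) fun y =>
        .of_mem_Icc _ _ (hF.comp measurable_prodMk_right).aemeasurable
          (ae_of_all _ fun x => hf.mem_Icc z₀ _)
    have hm : ∫ z, f z ∂Measure.pi μ = ∫ y, g y ∂ν := by
      rw [← integral_prod_symm _ (.of_mem_Icc _ _ hF.aemeasurable
        (ae_of_all _ fun p => hf.mem_Icc z₀ _)), ← hmp.integral_comp']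
      simp only [he]
    have hprod := (ih (fun j => μ (Fin.succAbove 0 j)) hgm hg).add_prod
      (H := fun p => f (Fin.insertNth 0 p.1 p.2) - g p.2)
      (hf.hasSubgaussianMGF_sub_integral_insertNth hfm 0 (μ 0)) fun t => ?_
    · rw [← hmp.map_eq] at hprod
      convert hprod.of_map e.measurable.aemeasurable using 1
      · ext z
        simp only [Function.comp_apply, sub_add_sub_cancel', he, hm, ν]
      · rw [Fin.sum_univ_succAbove _ 0, add_comm]
    · simp only [sub_add_sub_cancel']
      have hb := hf.mem_Icc z₀
      exact integrable_exp_mul_of_mem_Icc (hF.sub_const _).aemeasurable (ae_of_all _ fun p =>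
        ⟨sub_le_sub_right (hb _).1 _, sub_le_sub_right (hb _).2 _⟩)

theorem HasBoundedDifferences.hasSubgaussianMGF_sub_integral_of_iIndepFun {Ω : Type*}
    [MeasurableSpace Ω] {μ : Measure Ω} [IsProbabilityMeasure μ] {n : ℕ} {α : Fin n → Type*}
    [∀ i, MeasurableSpace (α i)] {f : ((i : Fin n) → α i) → ℝ} {c : Fin n → ℝ}
    (hfm : Measurable f) (hf : HasBoundedDifferences f c) {ξ : (i : Fin n) → Ω → α i}
    (hξ : ∀ i, Measurable (ξ i)) (hind : iIndepFun ξ μ) :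
    HasSubgaussianMGF (fun ω => f (fun i => ξ i ω) - ∫ ω', f (fun i => ξ i ω') ∂μ)
      (∑ i, (‖c i‖₊ / 2) ^ 2) μ := by
  have hΦ : Measurable fun ω i => ξ i ω := measurable_pi_lambda _ hξ
  have : ∀ i, IsProbabilityMeasure (μ.map (ξ i)) :=
    fun i => Measure.isProbabilityMeasure_map (hξ i).aemeasurable
  have h := hf.hasSubgaussianMGF_sub_integral_pi (fun i => μ.map (ξ i)) hfm
  rw [← hind.map_fun_eq_pi_map fun i => (hξ i).aemeasurable,
    integral_map hΦ.aemeasurable hfm.aestronglyMeasurable] at h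
  exact h.of_map hΦ.aemeasurable

/-- McDiarmid's bounded-differences inequality: if f has the bounded
differences property with constants cᵢ and Z₁,…,Zₙ are independent, then
P(f(Z₁,…,Zₙ) − E[f(Z₁,…,Zₙ)] ≥ t) ≤ exp(−2t²/∑ cᵢ²). -/
theorem stmt_12 {Ω : Type*} [MeasureSpace Ω] [IsProbabilityMeasure (volume : Measure Ω)]
    {Z : Type*} [MeasurableSpace Z]
    (n : ℕ) (f : (Fin n → Z) → ℝ) (hfm : Measurable f) (c : Fin n → ℝ)
    (hbd : ∀ (i : Fin n) (z z' : Fin n → Z), (∀ j, j ≠ i → z j = z' j) →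
      |f z - f z'| ≤ c i)
    (ξ : Fin n → Ω → Z) (hξm : ∀ i, Measurable (ξ i))
    (hind : iIndepFun ξ)
    (t : ℝ) (ht : 0 < t) :
    volume {ω | f (fun i => ξ i ω) - ∫ ω', f (fun i => ξ i ω') ≥ t} ≤
      ENNReal.ofReal (Real.exp (-2 * t ^ 2 / ∑ i, (c i) ^ 2)) := by
  have htail := (HasBoundedDifferences.hasSubgaussianMGF_sub_integral_of_iIndepFun hfm hbd hξm
    hind).measure_ge_le ht.le
  have hparam : ((∑ i, (‖c i‖₊ / 2) ^ 2 : ℝ≥0) : ℝ) = (∑ i, c i ^ 2) / 4 := by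
    push_cast [norm_eq_abs, div_pow, sq_abs, ← Finset.sum_div]
    norm_num
  rw [← ofReal_measureReal]
  refine ENNReal.ofReal_le_ofReal (htail.trans_eq ?_)
  rw [hparam]
  congr 1
  ring
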